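/- arXiv:1304.2554 — 2 statements merged into one kernel-verified Lean document; each statement's English description precedes it below -/
import Mathlib

section
/- Let D ⊆ ℝ^M be a compact convex set and G : ℝ^M → ℝ be C¹. Fix X in the nonnegative orthant and let P = ∇G(X)(I−R)ᵀ for a fixed M×M matrix R. If Λ(I−R)^{−1} + ε'·D̃ ∈ D, where D̃ = argmax_{D∈𝒟} ⟨P, D⟩ and ε' > 0, and if ⟨P, D̃⟩ ≥ η‖∇G(X)‖ for some η > 0, then max_{D∈𝒟} ⟨P, D⟩ ≥ ⟨∇G(X), Λ⟩ + ε'η‖∇G(X)‖. -/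
theorem Matrix.dotProduct_mulVec_vecMul_nonsing_inv {n R : Type*} [Fintype n] [DecidableEq n]
    [CommRing R] {A : Matrix n n R} (hA : IsUnit A) (g v : n → R) :
    dotProduct (A.mulVec g) (Matrix.vecMul v A⁻¹) = dotProduct g v := by
  rw [dotProduct_comm, Matrix.dotProduct_mulVec, Matrix.vecMul_vecMul,
    Matrix.nonsing_inv_mul _ ((Matrix.isUnit_iff_isUnit_det _).mp hA),
    Matrix.vecMul_one, dotProduct_comm]

theorem stmt12_general {M : ℕ}
    (g : Fin M → ℝ)
    (R : Matrix (Fin M) (Fin M) ℝ) (hR : IsUnit (1 - R))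
    (𝒟 : Set (Fin M → ℝ))
    (Λ Dtil : Fin M → ℝ)
    (hmax : ∀ D ∈ 𝒟, dotProduct ((1 - R).mulVec g) D
      ≤ dotProduct ((1 - R).mulVec g) Dtil)
    (ε' η : ℝ) (hε' : 0 < ε')
    (hin : (Matrix.vecMul Λ (1 - R)⁻¹ + ε' • Dtil) ∈ 𝒟)
    (hlow : η * Real.sqrt (dotProduct g g)
      ≤ dotProduct ((1 - R).mulVec g) Dtil) :
    dotProduct g Λ + ε' * η * Real.sqrt (dotProduct g g)
      ≤ dotProduct ((1 - R).mulVec g) Dtil := by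
  calc dotProduct g Λ + ε' * η * Real.sqrt (dotProduct g g)
      ≤ dotProduct g Λ + ε' * dotProduct ((1 - R).mulVec g) Dtil := by
        rw [mul_assoc]; gcongr
    _ = dotProduct ((1 - R).mulVec g) (Matrix.vecMul Λ (1 - R)⁻¹ + ε' • Dtil) := by
        rw [dotProduct_add, Matrix.dotProduct_mulVec_vecMul_nonsing_inv hR, dotProduct_smul,
          smul_eq_mul]
    _ ≤ dotProduct ((1 - R).mulVec g) Dtil := hmax _ hin

/-- The key drift inequality of Theorem 5: with pressure vector
`P = (I − R) ∇G(X)` (column form of `∇G(X)(I−R)ᵀ`), if the workload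
`Λ(I−R)⁻¹` shifted by `ε' Dtil` still lies in the compact convex feasible region
`𝒟`, where `Dtil` maximizes `⟨P, ·⟩` over `𝒟`, and `⟨P, Dtil⟩ ≥ η ‖∇G(X)‖`, then
`max_{D ∈ 𝒟} ⟨P, D⟩ ≥ ⟨∇G(X), Λ⟩ + ε' η ‖∇G(X)‖`. -/
theorem stmt12 {M : ℕ} (G : (Fin M → ℝ) → ℝ) (hG : ContDiff ℝ 1 G)
    (X : Fin M → ℝ) (hX : ∀ i, 0 ≤ X i)
    (g : Fin M → ℝ) (hg : ∀ v, fderiv ℝ G X v = dotProduct g v)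
    (R : Matrix (Fin M) (Fin M) ℝ) (hR : IsUnit (1 - R))
    (𝒟 : Set (Fin M → ℝ)) (hcomp : IsCompact 𝒟) (hconv : Convex ℝ 𝒟)
    (Λ Dtil : Fin M → ℝ) (hDtil : Dtil ∈ 𝒟)
    (hmax : ∀ D ∈ 𝒟, dotProduct ((1 - R).mulVec g) D
      ≤ dotProduct ((1 - R).mulVec g) Dtil)
    (ε' η : ℝ) (hε' : 0 < ε') (hη : 0 < η)
    (hin : (Matrix.vecMul Λ (1 - R)⁻¹ + ε' • Dtil) ∈ 𝒟)
    (hlow : η * Real.sqrt (dotProduct g g)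
      ≤ dotProduct ((1 - R).mulVec g) Dtil) :
    dotProduct g Λ + ε' * η * Real.sqrt (dotProduct g g)
      ≤ dotProduct ((1 - R).mulVec g) Dtil :=
  stmt12_general g R hR 𝒟 Λ Dtil hmax ε' η hε' hin hlow
end

section
/- Let G : ℝ^M → ℝ be C², with Hessian H_G, such that for all bounded Y and all unit rays, lim ‖H_G(X+Y)‖/‖H_G(X)‖ = 1 and lim ‖H_G(X)‖/‖∇G(X)‖ = 0 as ‖X‖ → ∞ along rays where these quantities are eventually nonzero. Then for any bounded vector Y, the second-order Taylor remainder R²(X,Y) = G(X+Y) − G(X) − ⟨∇G(X),Y⟩ satisfies R²(X,Y) = o(‖∇G(X)‖) as ‖X‖ → ∞ along rays. -/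
/-!
Bounding the Hessian on the segment `[X, X + Y]` by its maximum `‖H_G(Z)‖` gives
`|R²(X, Y)| ≤ ‖H_G(Z)‖ ‖Y‖²` with `Z - X` bounded. Along a ray,
`‖H_G(Z)‖ / ‖∇G(X)‖ = (‖H_G(Z)‖ / ‖H_G(X)‖) · (‖H_G(X)‖ / ‖∇G(X)‖) → 1 · 0`.
-/

open Filter Topology Set

section Taylor

variable {E F : Type*} [NormedAddCommGroup E] [NormedSpace ℝ E]
  [NormedAddCommGroup F] [NormedSpace ℝ F]

lemma norm_fderiv_fderiv_eq_norm_iteratedFDeriv_two (G : E → F) (z : E) :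
    ‖fderiv ℝ (fderiv ℝ G) z‖ = ‖iteratedFDeriv ℝ 2 G z‖ := by
  rw [← norm_iteratedFDeriv_one, norm_iteratedFDeriv_fderiv]

/-- Second-order Taylor bound: the derivative moves by at most `K ‖y‖` along the segment,
and the mean value inequality against the constant slope `fderiv ℝ G x` does the rest. -/
lemma norm_sub_sub_fderiv_le_of_norm_iteratedFDeriv_two_le {G : E → F} (hG : ContDiff ℝ 2 G)
    {x y : E} {K : ℝ} (hK : ∀ z ∈ segment ℝ x (x + y), ‖iteratedFDeriv ℝ 2 G z‖ ≤ K) :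
    ‖G (x + y) - G x - fderiv ℝ G x y‖ ≤ K * ‖y‖ * ‖y‖ := by
  have hx : x ∈ segment ℝ x (x + y) := left_mem_segment ℝ x (x + y)
  have hDG : Differentiable ℝ (fderiv ℝ G) :=
    (hG.fderiv_right (by norm_num)).differentiable one_ne_zero
  have hK0 : 0 ≤ K := (norm_nonneg _).trans (hK x hx)
  have hslope : ∀ z ∈ segment ℝ x (x + y), ‖fderiv ℝ G z - fderiv ℝ G x‖ ≤ K * ‖y‖ := by
    intro z hz
    calc ‖fderiv ℝ G z - fderiv ℝ G x‖ ≤ K * ‖z - x‖ :=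
          (convex_segment x (x + y)).norm_image_sub_le_of_norm_fderiv_le
            (fun w _ => hDG w)
            (fun w hw => (norm_fderiv_fderiv_eq_norm_iteratedFDeriv_two G w).trans_le (hK w hw))
            hx hz
      _ ≤ K * ‖y‖ := by
          gcongr
          simpa using norm_sub_le_of_mem_segment hz
  simpa using (convex_segment x (x + y)).norm_image_sub_le_of_norm_hasFDerivWithin_le'
    (fun z _ => ((hG.differentiable (by norm_num)) z).hasFDerivAt.hasFDerivWithinAt)
    hslope hx (right_mem_segment ℝ x (x + y))

lemma exists_mem_segment_norm_sub_sub_fderiv_le {G : E → F} (hG : ContDiff ℝ 2 G) (x y : E) :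
    ∃ z ∈ segment ℝ x (x + y),
      ‖G (x + y) - G x - fderiv ℝ G x y‖ ≤ ‖iteratedFDeriv ℝ 2 G z‖ * ‖y‖ * ‖y‖ := by
  have hcompact : IsCompact (segment ℝ x (x + y)) := by
    rw [segment_eq_image']
    exact isCompact_Icc.image (by fun_prop)
  obtain ⟨z, hz, hmax⟩ := hcompact.exists_isMaxOn ⟨x, left_mem_segment ℝ x (x + y)⟩
    (hG.continuous_iteratedFDeriv le_rfl).norm.continuousOn
  exact ⟨z, hz, norm_sub_sub_fderiv_le_of_norm_iteratedFDeriv_two_le hG hmax⟩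

end Taylor

lemma Filter.Tendsto.div_of_div_mul_div {α : Type*} {l : Filter α} {a b c : α → ℝ} {r s : ℝ}
    (hab : Tendsto (fun t => a t / b t) l (𝓝 r)) (hr : r ≠ 0)
    (hbc : Tendsto (fun t => b t / c t) l (𝓝 s)) :
    Tendsto (fun t => a t / c t) l (𝓝 (r * s)) := by
  refine (hab.mul hbc).congr' ?_
  filter_upwards [hab.eventually_ne hr] with t ht
  have hb : b t ≠ 0 := fun h => ht (by simp [h])
  rw [div_mul_div_comm, mul_comm (a t), mul_div_mul_left _ _ hb]

/-- Property (37) of Lemma 4: if the Hessian norm of a C² function `G` is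
translation-stable (`‖H(X+Y)‖/‖H(X)‖ → 1` for bounded `Y`) and negligible
compared to the gradient norm along nonnegative unit rays, then the
second-order Taylor remainder in any bounded direction is `o(‖∇G(X)‖)`
along rays. -/
theorem stmt14 {M : ℕ} (G : EuclideanSpace ℝ (Fin M) → ℝ) (hG : ContDiff ℝ 2 G)
    (hH : ∀ X₀ : EuclideanSpace ℝ (Fin M), ‖X₀‖ = 1 → (∀ i, 0 ≤ X₀ i) →
      ∀ (Y : ℝ → EuclideanSpace ℝ (Fin M)) (C : ℝ), (∀ α, ‖Y α‖ ≤ C) →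
      Tendsto (fun α : ℝ => ‖iteratedFDeriv ℝ 2 G (α • X₀ + Y α)‖ /
        ‖iteratedFDeriv ℝ 2 G (α • X₀)‖) atTop (𝓝 1))
    (hHg : ∀ X₀ : EuclideanSpace ℝ (Fin M), ‖X₀‖ = 1 → (∀ i, 0 ≤ X₀ i) →
      Tendsto (fun α : ℝ => ‖iteratedFDeriv ℝ 2 G (α • X₀)‖ / ‖gradient G (α • X₀)‖)
        atTop (𝓝 0)) :
    ∀ X₀ : EuclideanSpace ℝ (Fin M), ‖X₀‖ = 1 → (∀ i, 0 ≤ X₀ i) →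
    ∀ (Y : ℝ → EuclideanSpace ℝ (Fin M)) (C : ℝ), (∀ α, ‖Y α‖ ≤ C) →
    Tendsto (fun α : ℝ =>
      (G (α • X₀ + Y α) - G (α • X₀) - (inner ℝ (gradient G (α • X₀)) (Y α) : ℝ)) /
      ‖gradient G (α • X₀)‖) atTop (𝓝 0) := by
  intro X₀ hX₀ hX₀_nonneg Y C hY
  choose Z hZ hR using fun α : ℝ => exists_mem_segment_norm_sub_sub_fderiv_le hG (α • X₀) (Y α)
  have hZY : ∀ α, ‖Z α - α • X₀‖ ≤ C := fun α =>
    (norm_sub_le_of_mem_segment (hZ α)).trans (by simpa using hY α)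
  have hZH : Tendsto (fun α => ‖iteratedFDeriv ℝ 2 G (Z α)‖ / ‖iteratedFDeriv ℝ 2 G (α • X₀)‖)
      atTop (𝓝 1) := by
    simpa using hH X₀ hX₀ hX₀_nonneg (fun α => Z α - α • X₀) C hZY
  have hZg : Tendsto (fun α => ‖iteratedFDeriv ℝ 2 G (Z α)‖ / ‖gradient G (α • X₀)‖)
      atTop (𝓝 0) := by
    simpa using hZH.div_of_div_mul_div one_ne_zero (hHg X₀ hX₀ hX₀_nonneg)
  refine squeeze_zero_norm (fun α => ?_) (by simpa using hZg.const_mul (C * C))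
  rw [inner_gradient_left, norm_div, norm_norm, ← mul_div_assoc]
  gcongr
  calc _ ≤ ‖iteratedFDeriv ℝ 2 G (Z α)‖ * ‖Y α‖ * ‖Y α‖ := hR α
    _ ≤ ‖iteratedFDeriv ℝ 2 G (Z α)‖ * C * C := by
        have hC : 0 ≤ C := (norm_nonneg _).trans (hY α)
        gcongr <;> exact hY α
    _ = C * C * ‖iteratedFDeriv ℝ 2 G (Z α)‖ := by ring
end
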